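/- arXiv:2006.08473 — 5 statements merged into one kernel-verified Lean document; each statement's English description precedes it below -/
import Mathlib

section
/- Let f : Fin n → ℝ be ε-far from (1,3,2)-free, i.e., every g : Fin n → ℝ containing no indices i < j < k with g(i) < g(k) < g(j) differs from f in at least ε·n positions. Then there exists a family of at least ε·n/3 pairwise disjoint triples (i,j,k) with i < j < k and f(i) < f(k) < f(j). -/
/-!
Take a maximal family `T` of pairwise disjoint (1,3,2)-patterns of `f` and let `S` be the set of
their at most `3 |T|` indices. By maximality, `f` has no (1,3,2)-pattern avoiding `S`. Redefine `f`
on `S` by copying, to each index, the value of `f` at the nearest index outside `S` to its left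
(or the leftmost one if there is none): the result is `f ∘ π` for a monotone `π` with values
outside `S`, so any of its (1,3,2)-patterns would give one of `f` avoiding `S`. Hence
`ε n ≤ |S| ≤ 3 |T|`.
-/

/-- A triple (i,j,k) with i < j < k is a (1,3,2)-pattern of f if f i < f k < f j. -/
def Is132 {n : ℕ} (f : Fin n → ℝ) (p : Fin n × Fin n × Fin n) : Prop :=
  p.1 < p.2.1 ∧ p.2.1 < p.2.2 ∧ f p.1 < f p.2.2 ∧ f p.2.2 < f p.2.1

/-- The index set of a triple. -/
def tripleIdx {n : ℕ} (p : Fin n × Fin n × Fin n) : Finset (Fin n) :=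
  {p.1, p.2.1, p.2.2}

lemma exists_maximal_pairwiseDisjoint {β α : Type*} [Fintype β] [DecidableEq α]
    (P : β → Prop) (s : β → Finset α) (hs : ∀ b, P b → (s b).Nonempty) :
    ∃ T : Finset β, (∀ b ∈ T, P b) ∧ (T : Set β).PairwiseDisjoint s ∧
      ∀ b, P b → ¬ Disjoint (s b) (T.biUnion s) := by
  classical
  let V : Finset (Finset β) :=
    Finset.univ.filter fun T => (∀ b ∈ T, P b) ∧ (T : Set β).PairwiseDisjoint s
  obtain ⟨T, hTV, hTmax⟩ := V.exists_max_image Finset.card ⟨∅, by simp [V]⟩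
  obtain ⟨hTP, hTdisj⟩ := (Finset.mem_filter.mp hTV).2
  refine ⟨T, hTP, hTdisj, fun b hb hdisj => ?_⟩
  have hbT : b ∉ T := fun hbT =>
    (hs b hb).ne_empty (Finset.disjoint_self_iff_empty _ |>.mp
      (hdisj.mono_right (Finset.subset_biUnion_of_mem s hbT)))
  have hins : insert b T ∈ V := by
    refine Finset.mem_filter.mpr ⟨Finset.mem_univ _, ?_, ?_⟩
    · simpa [hb] using hTP
    · rw [Finset.coe_insert]
      exact hTdisj.insert fun c hc _ => hdisj.mono_right (Finset.subset_biUnion_of_mem s hc)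
  have := hTmax _ hins
  rw [Finset.card_insert_of_notMem hbT] at this
  omega

section monotoneRetract

variable {α : Type*} [LinearOrder α] (C : Finset α) (hC : C.Nonempty)

/-- The largest element of `C` below `a`, or the least element of `C` if there is none. -/
def monotoneRetract (a : α) : α :=
  (insert (C.min' hC) (C.filter (· ≤ a))).max' (Finset.insert_nonempty _ _)

lemma monotoneRetract_mem (a : α) : monotoneRetract C hC a ∈ C := by
  rcases Finset.mem_insert.mp (Finset.max'_mem _ (Finset.insert_nonempty (C.min' hC)
    (C.filter (· ≤ a)))) with h | h
  · rw [monotoneRetract, h]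
    exact C.min'_mem hC
  · exact (Finset.mem_filter.mp h).1

lemma monotoneRetract_of_mem {a : α} (ha : a ∈ C) : monotoneRetract C hC a = a := by
  have hmem : a ∈ insert (C.min' hC) (C.filter (· ≤ a)) := by simp [ha]
  refine le_antisymm (Finset.max'_le _ _ _ fun b hb => ?_) (Finset.le_max' _ a hmem)
  rcases Finset.mem_insert.mp hb with h | h
  · rw [h]
    exact C.min'_le a ha
  · exact (Finset.mem_filter.mp h).2

lemma monotone_monotoneRetract : Monotone (monotoneRetract C hC) := fun _ _ hab =>
  Finset.max'_subset _ <| Finset.insert_subset_insert _ fun _ hc =>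
    Finset.mem_filter.mpr ⟨(Finset.mem_filter.mp hc).1, (Finset.mem_filter.mp hc).2.trans hab⟩

end monotoneRetract

lemma Is132.of_comp {m n : ℕ} {f : Fin n → ℝ} {π : Fin m → Fin n} (hπ : Monotone π)
    {p : Fin m × Fin m × Fin m} (h : Is132 (f ∘ π) p) :
    Is132 f (π p.1, π p.2.1, π p.2.2) := by
  obtain ⟨hij, hjk, hik, hkj⟩ := h
  -- the two strict value inequalities separate the images of the indices
  exact ⟨(hπ hij.le).lt_of_ne fun h => (hik.trans hkj).ne (congrArg f h),
    (hπ hjk.le).lt_of_ne fun h => hkj.ne' (congrArg f h), hik, hkj⟩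

lemma exists_132free_eqOn {n : ℕ} (f : Fin n → ℝ) (C : Finset (Fin n))
    (hC : ∀ p, Is132 f p → ¬ tripleIdx p ⊆ C) :
    ∃ g : Fin n → ℝ, (¬ ∃ p, Is132 g p) ∧ ∀ i ∈ C, g i = f i := by
  rcases C.eq_empty_or_nonempty with rfl | hne
  · exact ⟨fun _ => 0, fun ⟨_, _, _, h₁, h₂⟩ => (h₁.trans h₂).false, by simp⟩
  refine ⟨f ∘ monotoneRetract C hne, fun ⟨p, hp⟩ => ?_,
    fun i hi => congrArg f (monotoneRetract_of_mem C hne hi)⟩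
  refine hC _ (hp.of_comp (monotone_monotoneRetract C hne)) ?_
  simp [tripleIdx, Finset.insert_subset_iff, monotoneRetract_mem]

theorem stmt0_general (n : ℕ) (ε : ℝ) (f : Fin n → ℝ)
    (hfar : ∀ g : Fin n → ℝ,
      (¬ ∃ p : Fin n × Fin n × Fin n, Is132 g p) →
      ε * n ≤ (Finset.univ.filter (fun i => f i ≠ g i)).card) :
    ∃ T : Finset (Fin n × Fin n × Fin n),
      (∀ p ∈ T, Is132 f p) ∧
      (∀ p ∈ T, ∀ q ∈ T, p ≠ q → Disjoint (tripleIdx p) (tripleIdx q)) ∧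
      ε * n / 3 ≤ T.card := by
  obtain ⟨T, hT132, hTdisj, hTmax⟩ :=
    exists_maximal_pairwiseDisjoint (Is132 f) tripleIdx fun p _ => Finset.insert_nonempty _ _
  refine ⟨T, hT132, hTdisj, ?_⟩
  set S := T.biUnion tripleIdx
  obtain ⟨g, hg, hgf⟩ := exists_132free_eqOn f Sᶜ fun p hp hsub =>
    hTmax p hp (le_compl_iff_disjoint_right.mp hsub)
  have hchanged : (Finset.univ.filter fun i => f i ≠ g i) ⊆ S := fun i hi => by
    by_contra hiS
    exact (Finset.mem_filter.mp hi).2 (hgf i (Finset.mem_compl.mpr hiS)).symm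
  have hS : S.card ≤ T.card * 3 :=
    Finset.card_biUnion_le_card_mul _ _ _ fun _ _ => Finset.card_le_three
  have : ε * n ≤ T.card * 3 :=
    (hfar g hg).trans (by exact_mod_cast (Finset.card_le_card hchanged).trans hS)
  linarith

theorem stmt0 (n : ℕ) (ε : ℝ) (hε : 0 < ε) (hε1 : ε ≤ 1) (f : Fin n → ℝ)
    (hfar : ∀ g : Fin n → ℝ,
      (¬ ∃ p : Fin n × Fin n × Fin n, Is132 g p) →
      ε * n ≤ (Finset.univ.filter (fun i => f i ≠ g i)).card) :
    ∃ T : Finset (Fin n × Fin n × Fin n),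
      (∀ p ∈ T, Is132 f p) ∧
      (∀ p ∈ T, ∀ q ∈ T, p ≠ q → Disjoint (tripleIdx p) (tripleIdx q)) ∧
      ε * n / 3 ≤ T.card :=
  stmt0_general n ε f hfar
end

section
/- Let π be a permutation of [k] and let f : Fin n → ℝ be ε-far from π-free. Then any maximal family T of pairwise disjoint π-patterns of f satisfies |T| ≥ ε·n/k. -/
/-- A strictly increasing k-tuple of indices `i` is a π-pattern of `f` if
`π a < π b` implies `f (i a) < f (i b)`. -/
def IsPattern {k n : ℕ} (π : Equiv.Perm (Fin k)) (f : Fin n → ℝ) (i : Fin k → Fin n) : Prop :=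
  StrictMono i ∧ ∀ a b : Fin k, π a < π b → f (i a) < f (i b)

/-- Two tuples are disjoint if they share no index. -/
def TuplesDisjoint {k n : ℕ} (i j : Fin k → Fin n) : Prop :=
  ∀ a b : Fin k, i a ≠ j b

/-!
Let `E` be the set of indices used by a maximal disjoint family `T` of π-patterns, so that
every π-pattern of `f` meets `E` and `|E| ≤ k·|T|`. Replacing each value of `f` on `E` by the
value at the nearest index outside `E` to its left (the leftmost index outside `E` if there
is none) amounts to composing `f` with a monotone retraction `p` onto the complement of `E`.
A π-pattern `i` of `f ∘ p` has distinct values, so `p ∘ i` is again strictly increasing and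
hence a π-pattern of `f` avoiding `E`, which is impossible. Thus `f ∘ p` is π-free and differs
from `f` only on `E`, giving `ε·n ≤ |E| ≤ k·|T|`.
-/

theorem Finset.exists_monotone_retraction {α : Type*} [LinearOrder α] {s : Finset α}
    (hs : s.Nonempty) : ∃ p : α → α, Monotone p ∧ (∀ x, p x ∈ s) ∧ ∀ x ∈ s, p x = x := by
  let below : α → Finset α := fun x => insert (s.min' hs) (s.filter (· ≤ x))
  have below_subset : ∀ x, below x ⊆ s := fun x =>
    Finset.insert_subset (s.min'_mem hs) (Finset.filter_subset _ _)
  refine ⟨fun x => (below x).max' (Finset.insert_nonempty _ _), ?_, ?_, ?_⟩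
  · intro x y hxy
    refine Finset.max'_subset _ (Finset.insert_subset_insert _ ?_)
    exact Finset.monotone_filter_right s fun _ _ hzx => hzx.trans hxy
  · exact fun x => below_subset x (Finset.max'_mem _ _)
  · intro x hx
    refine le_antisymm (Finset.max'_le _ _ _ fun z hz => ?_) (Finset.le_max' _ _ ?_)
    · rcases Finset.mem_insert.mp hz with rfl | hz
      · exact s.min'_le x hx
      · exact (Finset.mem_filter.mp hz).2
    · exact Finset.mem_insert_of_mem (Finset.mem_filter.mpr ⟨hx, le_rfl⟩)

namespace IsPattern

variable {k n : ℕ} {π : Equiv.Perm (Fin k)}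

theorem injective_comp {f : Fin n → ℝ} {i : Fin k → Fin n} (h : IsPattern π f i) :
    Function.Injective (f ∘ i) := by
  intro a b hab
  by_contra hne
  rcases lt_or_gt_of_ne ((Equiv.injective π).ne hne) with hlt | hlt
  · exact (h.2 a b hlt).ne hab
  · exact (h.2 b a hlt).ne' hab

theorem comp_monotone {f : Fin n → ℝ} {p : Fin n → Fin n} {i : Fin k → Fin n}
    (h : IsPattern π (f ∘ p) i) (hp : Monotone p) : IsPattern π f (p ∘ i) :=
  ⟨(hp.comp h.1.monotone).strictMono_of_injective
    fun _ _ hab => h.injective_comp (congrArg f hab), h.2⟩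

end IsPattern

theorem exists_patternFree_eqOn_compl {k n : ℕ} {π : Equiv.Perm (Fin k)} {f : Fin n → ℝ}
    {E : Finset (Fin n)} (hE : ∀ i, IsPattern π f i → ∃ a, i a ∈ E) (hEc : Eᶜ.Nonempty) :
    ∃ g : Fin n → ℝ, (¬ ∃ i, IsPattern π g i) ∧ ∀ x ∉ E, g x = f x := by
  obtain ⟨p, hp, hpE, hp_id⟩ := Finset.exists_monotone_retraction hEc
  refine ⟨f ∘ p, ?_, fun x hx => congrArg f (hp_id x (Finset.mem_compl.mpr hx))⟩
  rintro ⟨i, hi⟩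
  obtain ⟨a, ha⟩ := hE _ (hi.comp_monotone hp)
  exact Finset.mem_compl.mp (hpE (i a)) ha

theorem le_card_of_forall_pattern_meets {k n : ℕ} {π : Equiv.Perm (Fin k)} {ε : ℝ}
    (hε1 : ε ≤ 1) {f : Fin n → ℝ}
    (hfar : ∀ g : Fin n → ℝ, (¬ ∃ i : Fin k → Fin n, IsPattern π g i) →
      ε * n ≤ (Finset.univ.filter (fun x => f x ≠ g x)).card)
    {E : Finset (Fin n)} (hE : ∀ i, IsPattern π f i → ∃ a, i a ∈ E) :
    ε * n ≤ E.card := by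
  rcases Eᶜ.eq_empty_or_nonempty with hEc | hEc
  · rw [(Finset.compl_eq_empty_iff E).mp hEc, Finset.card_univ, Fintype.card_fin]
    exact mul_le_of_le_one_left n.cast_nonneg hε1
  · obtain ⟨g, hg_free, hg_eq⟩ := exists_patternFree_eqOn_compl hE hEc
    have hdiff : Finset.univ.filter (fun x => f x ≠ g x) ⊆ E := fun x hx => by
      by_contra hxE
      exact (Finset.mem_filter.mp hx).2 (hg_eq x hxE).symm
    exact (hfar g hg_free).trans (by exact_mod_cast Finset.card_le_card hdiff)

theorem stmt1_general (k n : ℕ) (π : Equiv.Perm (Fin k)) (ε : ℝ) (hε1 : ε ≤ 1)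
    (f : Fin n → ℝ)
    (hfar : ∀ g : Fin n → ℝ,
      (¬ ∃ i : Fin k → Fin n, IsPattern π g i) →
      ε * n ≤ (Finset.univ.filter (fun x => f x ≠ g x)).card)
    (T : Finset (Fin k → Fin n))
    (hmax : ∀ i : Fin k → Fin n, IsPattern π f i → ∃ j ∈ T, ¬ TuplesDisjoint i j) :
    ε * n / k ≤ T.card := by
  set E : Finset (Fin n) := T.biUnion fun t => Finset.univ.image t
  have hE : ∀ i, IsPattern π f i → ∃ a, i a ∈ E := by
    intro i hi
    obtain ⟨t, ht, hmeet⟩ := hmax i hi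
    simp only [TuplesDisjoint, not_forall, not_not] at hmeet
    obtain ⟨a, b, hab⟩ := hmeet
    exact ⟨a, Finset.mem_biUnion.mpr ⟨t, ht, Finset.mem_image.mpr ⟨b, Finset.mem_univ b, hab.symm⟩⟩⟩
  have hEcard : E.card ≤ T.card * k := Finset.card_biUnion_le_card_mul _ _ _ fun t _ =>
    Finset.card_image_le.trans (Finset.card_univ.trans (Fintype.card_fin k)).le
  refine div_le_of_le_mul₀ k.cast_nonneg T.card.cast_nonneg ?_
  calc ε * n ≤ E.card := le_card_of_forall_pattern_meets hε1 hfar hE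
    _ ≤ T.card * k := by exact_mod_cast hEcard

theorem stmt1 (k n : ℕ) (π : Equiv.Perm (Fin k)) (ε : ℝ) (hε : 0 < ε) (hε1 : ε ≤ 1)
    (hk : 0 < k) (f : Fin n → ℝ)
    (hfar : ∀ g : Fin n → ℝ,
      (¬ ∃ i : Fin k → Fin n, IsPattern π g i) →
      ε * n ≤ (Finset.univ.filter (fun x => f x ≠ g x)).card)
    (T : Finset (Fin k → Fin n))
    (hT : ∀ i ∈ T, IsPattern π f i)
    (hdisj : ∀ i ∈ T, ∀ j ∈ T, i ≠ j → TuplesDisjoint i j)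
    (hmax : ∀ i : Fin k → Fin n, IsPattern π f i → ∃ j ∈ T, ¬ TuplesDisjoint i j) :
    ε * n / k ≤ T.card :=
  stmt1_general k n π ε hε1 f hfar T hmax
end

section
/- Let I be a finite interval of integers and S ⊆ I with |S| ≥ ε·|I| for some ε ∈ (0,1]. Say an element i ∈ S is γ-deserted if there is a subinterval J ⊆ I containing i with |S ∩ J| < γ·|J|. Then for every γ < 1, at most 3γ(1-ε)|I|/(1-γ) elements of S are γ-deserted. -/
/-!
Every deserted point lies in a subinterval `J ⊆ I` with `|S ∩ J| < γ|J|`, i.e.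
`|S ∩ J| ≤ γ/(1-γ) · |J \ S|`. Choosing greedily, left to right, the witness interval that reaches
furthest right gives a subcover in which only consecutive intervals overlap. Hence every point of
`I \ S` is counted at most twice, and the number of deserted points is at most
`2γ/(1-γ) · |I \ S| ≤ 2γ(1-ε)|I|/(1-γ)`.
-/

/-- `i ∈ S` is γ-deserted in the interval `Icc a b` if some subinterval `J ⊆ Icc a b`
containing `i` satisfies `|S ∩ J| < γ|J|`. -/
def Deserted (a b : ℤ) (S : Finset ℤ) (γ : ℝ) (i : ℤ) : Prop :=
  ∃ c d : ℤ, Finset.Icc c d ⊆ Finset.Icc a b ∧ i ∈ Finset.Icc c d ∧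
    ((S ∩ Finset.Icc c d).card : ℝ) < γ * (Finset.Icc c d).card

open Finset

lemma card_filter_lt_eq_add (s : Finset ℤ) {x y : ℤ} (hxy : x ≤ y) :
    #{z ∈ s | x < z} = #{z ∈ s | x < z ∧ z ≤ y} + #{z ∈ s | y < z} := by
  rw [← card_union_of_disjoint (disjoint_filter.2 fun z _ h => by omega)]
  congr 1
  ext z
  by_cases hz : z ∈ s <;> simp only [mem_filter, mem_union, hz, true_and, false_and, or_self]
  omega

lemma exists_mem_Icc_max_snd {𝓙 : Finset (ℤ × ℤ)} {i : ℤ} (hi : ∃ J ∈ 𝓙, i ∈ Icc J.1 J.2) :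
    ∃ J ∈ 𝓙, i ∈ Icc J.1 J.2 ∧ ∀ J' ∈ 𝓙, i ∈ Icc J'.1 J'.2 → J'.2 ≤ J.2 := by
  obtain ⟨J, hJ, hmax⟩ := exists_max_image {J ∈ 𝓙 | i ∈ Icc J.1 J.2} Prod.snd
    (by simpa only [filter_nonempty_iff] using hi)
  exact ⟨J, (mem_filter.1 hJ).1, (mem_filter.1 hJ).2,
    fun J' hJ' hi' => hmax J' (mem_filter.2 ⟨hJ', hi'⟩)⟩

section Covering

variable {D T : Finset ℤ} {𝓙 : Finset (ℤ × ℤ)} {K : ℝ}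

/- The least point of `D` beyond `e` is covered by the interval `[c, d]` of `𝓙` reaching furthest
right; `hpe` forces `p < c`, and the rest of `D` is handled with `(p, e)` replaced by `(e, d)`.
So each point of `T` is charged at most twice, once in each of the two sums. -/
theorem card_filter_lt_le_of_cover (hK : 0 ≤ K) (hcover : ∀ x ∈ D, ∃ J ∈ 𝓙, x ∈ Icc J.1 J.2)
    (hsparse : ∀ J ∈ 𝓙, (#(D ∩ Icc J.1 J.2) : ℝ) ≤ K * #(T ∩ Icc J.1 J.2))
    (p e : ℤ) (hpe : ∀ J ∈ 𝓙, J.1 ≤ p → J.2 ≤ e) :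
    (#{x ∈ D | e < x} : ℝ) ≤ K * (#{x ∈ T | p < x} + #{x ∈ T | e < x}) := by
  induction hn : #{x ∈ D | e < x} using Nat.strong_induction_on generalizing p e with
  | _ n ih =>
  subst hn
  obtain hempty | hne := {x ∈ D | e < x}.eq_empty_or_nonempty
  · rw [hempty, card_empty, Nat.cast_zero]
    positivity
  set i := {x ∈ D | e < x}.min' hne
  obtain ⟨hiD, hei⟩ := mem_filter.1 (min'_mem _ hne)
  obtain ⟨⟨c, d⟩, hJ, hiJ, hmax⟩ := exists_mem_Icc_max_snd (hcover i hiD)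
  obtain ⟨hci, hid⟩ : c ≤ i ∧ i ≤ d := mem_Icc.1 hiJ
  have hpc : p < c := by
    by_contra! hcp
    have := hpe _ hJ hcp
    omega
  have hD_split := card_filter_lt_eq_add D (hei.le.trans hid)
  have hT_split := card_filter_lt_eq_add T (hpc.le.trans (hci.trans hid))
  have hfirst : (#{x ∈ D | e < x ∧ x ≤ d} : ℝ) ≤ K * #{x ∈ T | p < x ∧ x ≤ d} := calc
    (#{x ∈ D | e < x ∧ x ≤ d} : ℝ) ≤ #(D ∩ Icc c d) := by
      gcongr
      intro x hx
      obtain ⟨hxD, hex, hxd⟩ := mem_filter.1 hx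
      have : i ≤ x := min'_le _ _ (mem_filter.2 ⟨hxD, hex⟩)
      exact mem_inter.2 ⟨hxD, mem_Icc.2 ⟨by omega, hxd⟩⟩
    _ ≤ K * #(T ∩ Icc c d) := by simpa only using hsparse _ hJ
    _ ≤ K * #{x ∈ T | p < x ∧ x ≤ d} := by
      gcongr
      intro x hx
      rw [mem_inter, mem_Icc] at hx
      obtain ⟨hxT, hcx, hxd⟩ := hx
      exact mem_filter.2 ⟨hxT, by omega, hxd⟩
  have hpe' : ∀ J ∈ 𝓙, J.1 ≤ e → J.2 ≤ d := fun J hJ' hJe => by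
    by_contra! hdJ
    have := hmax J hJ' (mem_Icc.2 ⟨by omega, by omega⟩)
    omega
  have hlt : #{x ∈ D | d < x} < #{x ∈ D | e < x} := by
    have : 0 < #{x ∈ D | e < x ∧ x ≤ d} := card_pos.2 ⟨i, mem_filter.2 ⟨hiD, hei, hid⟩⟩
    omega
  have hrest := ih _ hlt e d hpe' rfl
  rw [hD_split, hT_split]
  push_cast
  linarith

theorem card_le_two_mul_of_cover (hK : 0 ≤ K) (hcover : ∀ x ∈ D, ∃ J ∈ 𝓙, x ∈ Icc J.1 J.2)
    (hsparse : ∀ J ∈ 𝓙, (#(D ∩ Icc J.1 J.2) : ℝ) ≤ K * #(T ∩ Icc J.1 J.2)) :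
    (#D : ℝ) ≤ 2 * K * #T := by
  obtain ⟨m, hm⟩ := (𝓙.image Prod.fst).bddBelow
  have hm' : ∀ J ∈ 𝓙, m ≤ J.1 := fun J hJ => hm (mem_image_of_mem _ hJ)
  have hD : {x ∈ D | m - 1 < x} = D := filter_true_of_mem fun x hx => by
    obtain ⟨J, hJ, hxJ⟩ := hcover x hx
    have := hm' J hJ
    have := (mem_Icc.1 hxJ).1
    omega
  have key := card_filter_lt_le_of_cover hK hcover hsparse (m - 1) (m - 1)
    fun J hJ h => absurd (hm' J hJ) (by omega)
  have hT : (#{x ∈ T | m - 1 < x} : ℝ) ≤ #T := by exact_mod_cast card_filter_le _ _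
  rw [hD] at key
  linarith [mul_le_mul_of_nonneg_left hT hK]

end Covering

lemma card_inter_le_div_mul_card_sdiff {α : Type*} [DecidableEq α] {s J : Finset α} {γ : ℝ}
    (hγ : γ < 1) (h : (#(s ∩ J) : ℝ) < γ * #J) :
    (#(s ∩ J) : ℝ) ≤ γ / (1 - γ) * #(J \ s) := by
  have hJ : (#J : ℝ) = #(s ∩ J) + #(J \ s) := by
    rw [inter_comm]
    exact_mod_cast (card_inter_add_card_sdiff J s).symm
  rw [hJ] at h
  rw [div_mul_eq_mul_div, le_div_iff₀ (by linarith)]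
  linarith

open Classical in
noncomputable def sparseIntervals (a b : ℤ) (S : Finset ℤ) (γ : ℝ) : Finset (ℤ × ℤ) :=
  {J ∈ Icc a b ×ˢ Icc a b | (#(S ∩ Icc J.1 J.2) : ℝ) < γ * #(Icc J.1 J.2)}

section Deserted

variable {a b : ℤ} {S : Finset ℤ} {γ : ℝ}

lemma Icc_subset_of_mem_sparseIntervals {J : ℤ × ℤ} (hJ : J ∈ sparseIntervals a b S γ) :
    Icc J.1 J.2 ⊆ Icc a b := by
  obtain ⟨hJ1, hJ2⟩ := mem_product.1 (mem_filter.1 hJ).1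
  exact Icc_subset_Icc (mem_Icc.1 hJ1).1 (mem_Icc.1 hJ2).2

lemma Deserted.exists_mem_sparseIntervals {i : ℤ} (h : Deserted a b S γ i) :
    ∃ J ∈ sparseIntervals a b S γ, i ∈ Icc J.1 J.2 := by
  obtain ⟨c, d, hsub, hi, hsparse⟩ := h
  have hcd : c ≤ d := (mem_Icc.1 hi).1.trans (mem_Icc.1 hi).2
  refine ⟨(c, d), mem_filter.2 ⟨mem_product.2 ⟨hsub ?_, hsub ?_⟩, hsparse⟩, hi⟩ <;> simp [hcd]

open Classical in
theorem card_filter_deserted_le (hγ0 : 0 ≤ γ) (hγ1 : γ < 1) :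
    (#{i ∈ S | Deserted a b S γ i} : ℝ) ≤ 2 * (γ / (1 - γ)) * #(Icc a b \ S) := by
  refine card_le_two_mul_of_cover (div_nonneg hγ0 (by linarith))
    (fun i hi => (mem_filter.1 hi).2.exists_mem_sparseIntervals) fun J hJ => ?_
  rw [sdiff_inter_right_comm, inter_eq_right.2 (Icc_subset_of_mem_sparseIntervals hJ)]
  calc (#({i ∈ S | Deserted a b S γ i} ∩ Icc J.1 J.2) : ℝ) ≤ #(S ∩ Icc J.1 J.2) := by
        gcongr
        exact filter_subset _ _
    _ ≤ γ / (1 - γ) * #(Icc J.1 J.2 \ S) :=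
        card_inter_le_div_mul_card_sdiff hγ1 (mem_filter.1 hJ).2

end Deserted

open Classical in
theorem stmt5_general (a b : ℤ) (S : Finset ℤ) (ε γ : ℝ)
    (hγ0 : 0 < γ) (hγ1 : γ < 1)
    (hSsub : S ⊆ Finset.Icc a b)
    (hScard : ε * (Finset.Icc a b).card ≤ S.card) :
    ((S.filter (fun i => Deserted a b S γ i)).card : ℝ) ≤
      3 * γ * (1 - ε) * (Finset.Icc a b).card / (1 - γ) := by
  have hT : (#(Icc a b \ S) : ℝ) ≤ (1 - ε) * #(Icc a b) := by
    rw [cast_card_sdiff hSsub]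
    linarith
  have hK : 0 ≤ γ / (1 - γ) := div_nonneg hγ0.le (by linarith)
  calc ((S.filter (fun i => Deserted a b S γ i)).card : ℝ)
      ≤ 2 * (γ / (1 - γ)) * #(Icc a b \ S) := card_filter_deserted_le hγ0.le hγ1
    _ ≤ 3 * (γ / (1 - γ)) * ((1 - ε) * #(Icc a b)) := by
      gcongr
      norm_num
    _ = 3 * γ * (1 - ε) * (Finset.Icc a b).card / (1 - γ) := by ring

open Classical in
theorem stmt5 (a b : ℤ) (S : Finset ℤ) (ε γ : ℝ) (hε : 0 < ε) (hε1 : ε ≤ 1)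
    (hγ0 : 0 < γ) (hγ1 : γ < 1)
    (hSsub : S ⊆ Finset.Icc a b)
    (hScard : ε * (Finset.Icc a b).card ≤ S.card) :
    ((S.filter (fun i => Deserted a b S γ i)).card : ℝ) ≤
      3 * γ * (1 - ε) * (Finset.Icc a b).card / (1 - γ) :=
  stmt5_general a b S ε γ hγ0 hγ1 hSsub hScard
end

section
/- Let f : Fin n → ℝ be ε-far from (1,2)-free (i.e., from non-decreasing-pattern-free, meaning every g with no i < j, g(i) < g(j) differs from f on ≥ ε·n points). Then f contains at least ε·n/2 pairwise disjoint pairs (i,j) with i < j and f(i) < f(j). -/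
/-!
Take a maximal family `T` of pairwise disjoint `(1,2)`-patterns. By maximality `f` has no
`(1,2)`-pattern among the at most `2 * #T` points left uncovered by `T`, i.e. it is antitone there,
and an antitone function on a finite set extends to an antitone `g` on all of `Fin n`. Then `f` and
`g` differ only on points covered by `T`, so `ε * n ≤ 2 * #T`.
-/

open Finset

namespace DisjointPairs

variable {α : Type*} [DecidableEq α]

def pairSupport (T : Finset (α × α)) : Finset α :=
  T.biUnion fun p => {p.1, p.2}

def IsDisjointPairFamily (R : α → α → Prop) (T : Finset (α × α)) : Prop :=
  (∀ p ∈ T, R p.1 p.2) ∧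
    ∀ p ∈ T, ∀ q ∈ T, p ≠ q → Disjoint ({p.1, p.2} : Finset α) {q.1, q.2}

theorem card_pairSupport_le (T : Finset (α × α)) : #(pairSupport T) ≤ 2 * #T :=
  calc #(pairSupport T) ≤ ∑ p ∈ T, #({p.1, p.2} : Finset α) := card_biUnion_le
    _ ≤ ∑ _p ∈ T, 2 := sum_le_sum fun _ _ => card_le_two
    _ = 2 * #T := by rw [sum_const, smul_eq_mul, mul_comm]

theorem mem_pairSupport_of_mem {T : Finset (α × α)} {p : α × α} (hp : p ∈ T) :
    p.1 ∈ pairSupport T ∧ p.2 ∈ pairSupport T :=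
  ⟨mem_biUnion.2 ⟨p, hp, by simp⟩, mem_biUnion.2 ⟨p, hp, by simp⟩⟩

theorem disjoint_pairSupport {T : Finset (α × α)} {i j : α} (hi : i ∉ pairSupport T)
    (hj : j ∉ pairSupport T) {q : α × α} (hq : q ∈ T) :
    Disjoint ({i, j} : Finset α) {q.1, q.2} := by
  rw [disjoint_left]
  intro a ha haq
  have haT : a ∈ pairSupport T := mem_biUnion.2 ⟨q, hq, haq⟩
  rcases mem_insert.1 ha with rfl | ha
  · exact hi haT
  · exact hj (mem_singleton.1 ha ▸ haT)

theorem IsDisjointPairFamily.insert {R : α → α → Prop} {T : Finset (α × α)}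
    (hT : IsDisjointPairFamily R T) {i j : α} (hij : R i j) (hi : i ∉ pairSupport T)
    (hj : j ∉ pairSupport T) : IsDisjointPairFamily R (insert (i, j) T) := by
  obtain ⟨hR, hdisj⟩ := hT
  refine ⟨fun p hp => ?_, fun p hp q hq hpq => ?_⟩
  · rcases mem_insert.1 hp with rfl | hp
    exacts [hij, hR p hp]
  rcases mem_insert.1 hp with rfl | hp <;> rcases mem_insert.1 hq with rfl | hq
  · exact absurd rfl hpq
  · exact disjoint_pairSupport hi hj hq
  · exact (disjoint_pairSupport hi hj hp).symm
  · exact hdisj p hp q hq hpq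

theorem exists_isDisjointPairFamily_forall_not_rel [Fintype α] (R : α → α → Prop) :
    ∃ T, IsDisjointPairFamily R T ∧
      ∀ i ∉ pairSupport T, ∀ j ∉ pairSupport T, ¬ R i j := by
  classical
  obtain ⟨T, hT, hmax⟩ := exists_max_image {T | IsDisjointPairFamily R T} card
    ⟨∅, by simp [IsDisjointPairFamily]⟩
  rw [mem_filter_univ] at hT
  refine ⟨T, hT, fun i hi j hj hij => ?_⟩
  have hnew : (i, j) ∉ T := fun h => hi (mem_pairSupport_of_mem h).1
  have := hmax _ ((mem_filter_univ _).2 (hT.insert hij hi hj))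
  rw [card_insert_of_notMem hnew] at this
  omega

end DisjointPairs

open DisjointPairs

theorem stmt11_general (n : ℕ) (ε : ℝ) (f : Fin n → ℝ)
    (hfar : ∀ g : Fin n → ℝ,
      (¬ ∃ i j : Fin n, i < j ∧ g i < g j) →
      ε * n ≤ (Finset.univ.filter (fun x => f x ≠ g x)).card) :
    ∃ T : Finset (Fin n × Fin n),
      (∀ p ∈ T, p.1 < p.2 ∧ f p.1 < f p.2) ∧
      (∀ p ∈ T, ∀ q ∈ T, p ≠ q →
        Disjoint ({p.1, p.2} : Finset (Fin n)) {q.1, q.2}) ∧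
      ε * n / 2 ≤ T.card := by
  obtain ⟨T, ⟨hpat, hdisj⟩, hmax⟩ :=
    exists_isDisjointPairFamily_forall_not_rel fun i j : Fin n => i < j ∧ f i < f j
  refine ⟨T, hpat, hdisj, ?_⟩
  have hanti : AntitoneOn f {x | x ∉ pairSupport T} := fun i hi j hj hij =>
    le_of_not_gt fun hlt => hmax i hi j hj ⟨hij.lt_of_ne (ne_of_apply_ne f hlt.ne), hlt⟩
  obtain ⟨g, hg, hfg⟩ := hanti.exists_antitone_extension
    ((Set.toFinite _).image f).bddBelow ((Set.toFinite _).image f).bddAbove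
  have hsub : ({x | f x ≠ g x} : Finset (Fin n)) ⊆ pairSupport T := fun x hx =>
    by_contra fun hxT => ((mem_filter_univ _).1 hx) (hfg hxT)
  have hfar_g := hfar g fun ⟨i, j, hij, hlt⟩ => (hg hij.le).not_gt hlt
  have hcard : ((#{x | f x ≠ g x} : ℕ) : ℝ) ≤ 2 * #T := by
    exact_mod_cast (card_le_card hsub).trans (card_pairSupport_le T)
  linarith

theorem stmt11 (n : ℕ) (ε : ℝ) (hε : 0 < ε) (hε1 : ε ≤ 1) (f : Fin n → ℝ)
    (hfar : ∀ g : Fin n → ℝ,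
      (¬ ∃ i j : Fin n, i < j ∧ g i < g j) →
      ε * n ≤ (Finset.univ.filter (fun x => f x ≠ g x)).card) :
    ∃ T : Finset (Fin n × Fin n),
      (∀ p ∈ T, p.1 < p.2 ∧ f p.1 < f p.2) ∧
      (∀ p ∈ T, ∀ q ∈ T, p ≠ q →
        Disjoint ({p.1, p.2} : Finset (Fin n)) {q.1, q.2}) ∧
      ε * n / 2 ≤ T.card :=
  stmt11_general n ε f hfar
end

section
/- Let f : Fin n → ℝ and suppose T₀ is a finite family of pairwise disjoint (1,3,2)-patterns of f. Run the greedy procedure that repeatedly takes the maximum unused index k ∈ E(T₀), then the maximum unused j such that some unused i makes (i,j,k) a (1,3,2)-pattern, then the maximum such i, adding (i,j,k) when possible. Then the resulting family T satisfies |T| ≥ |T₀|/3. -/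
/-!
Every (1,3,2)-pattern whose three indices are still available meets a triple of the greedy
output: the greedy run eventually reaches the top `k` of the pattern as the current maximum
unless the pattern has been hit before, and at that moment the pattern itself is a candidate,
so some triple with top `k` is added. The patterns of `T₀` are disjoint, so they meet `E(T)`
in distinct points, whence `|T₀| ≤ |E(T)| ≤ 3|T|`.
-/

open Classical in
/-- The greedy right-to-left procedure: repeatedly take the maximum unused index `k`,
then the maximum unused `j` for which some unused `i` makes `(i,j,k)` a (1,3,2)-pattern
of `f`, then the maximum such `i`, adding `(i,j,k)` when possible. `avail` is the set
of still-unused indices of `E(T₀)`. -/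
noncomputable def greedy132 {n : ℕ} (f : Fin n → ℝ) (avail : Finset (Fin n)) :
    Finset (Fin n × Fin n × Fin n) :=
  if h : avail.Nonempty then
    let k := avail.max' h
    let S := avail.filter fun j => j < k ∧ ∃ i ∈ avail, i < j ∧ f i < f k ∧ f k < f j
    if hS : S.Nonempty then
      let j := S.max' hS
      let M := avail.filter fun i => i < j ∧ f i < f k ∧ f k < f j
      if hM : M.Nonempty then
        let i := M.max' hM
        insert (i, j, k) (greedy132 f (((avail.erase k).erase j).erase i))
      else greedy132 f (avail.erase k)
    else greedy132 f (avail.erase k)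
  else ∅
termination_by avail.card
decreasing_by
  · calc ((((avail.erase (avail.max' h)).erase _).erase _).card)
        ≤ ((avail.erase (avail.max' h)).erase _).card := Finset.card_erase_le
      _ ≤ (avail.erase (avail.max' h)).card := Finset.card_erase_le
      _ < avail.card := Finset.card_erase_lt_of_mem (avail.max'_mem h)
  · exact Finset.card_erase_lt_of_mem (avail.max'_mem h)
  · exact Finset.card_erase_lt_of_mem (avail.max'_mem h)

def IsPattern132 {n : ℕ} (f : Fin n → ℝ) (p : Fin n × Fin n × Fin n) : Prop :=
  p.1 < p.2.1 ∧ p.2.1 < p.2.2 ∧ f p.1 < f p.2.2 ∧ f p.2.2 < f p.2.1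

theorem IsPattern132.le_of_mem_tripleIdx {n : ℕ} {f : Fin n → ℝ} {p : Fin n × Fin n × Fin n}
    (hp : IsPattern132 f p) {x : Fin n} (hx : x ∈ tripleIdx p) : x ≤ p.2.2 := by
  obtain ⟨h12, h23, -⟩ := hp
  simp only [tripleIdx, Finset.mem_insert, Finset.mem_singleton] at hx
  rcases hx with rfl | rfl | rfl
  exacts [(h12.trans h23).le, h23.le, le_rfl]

section Greedy

variable {n : ℕ} (f : Fin n → ℝ) {avail : Finset (Fin n)}

theorem greedy132_eq_insert (h : avail.Nonempty)
    (hex : ∃ j ∈ avail, ∃ i ∈ avail, IsPattern132 f (i, j, avail.max' h)) :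
    ∃ i j, greedy132 f avail = insert (i, j, avail.max' h)
      (greedy132 f (((avail.erase (avail.max' h)).erase j).erase i)) := by
  rw [greedy132, dif_pos h]
  dsimp only
  split_ifs with hS hM
  · exact ⟨_, _, rfl⟩
  · obtain ⟨-, -, i, hi, hij, hfi, hfj⟩ := Finset.mem_filter.mp (Finset.max'_mem _ hS)
    exact absurd ⟨i, Finset.mem_filter.mpr ⟨hi, hij, hfi, hfj⟩⟩ hM
  · obtain ⟨j, hj, i, hi, hij, hjk, hfi, hfj⟩ := hex
    exact absurd ⟨j, Finset.mem_filter.mpr ⟨hj, hjk, i, hi, hij, hfi, hfj⟩⟩ hS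

theorem greedy132_eq_erase_max (h : avail.Nonempty)
    (hno : ¬ ∃ j ∈ avail, ∃ i ∈ avail, IsPattern132 f (i, j, avail.max' h)) :
    greedy132 f avail = greedy132 f (avail.erase (avail.max' h)) := by
  rw [greedy132, dif_pos h]
  dsimp only
  split_ifs with hS hM
  · obtain ⟨hj, hjk, -⟩ := Finset.mem_filter.mp (Finset.max'_mem _ hS)
    obtain ⟨hi, hij, hfi, hfj⟩ := Finset.mem_filter.mp (Finset.max'_mem _ hM)
    exact absurd ⟨_, hj, _, hi, hij, hjk, hfi, hfj⟩ hno
  all_goals rfl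

theorem not_disjoint_tripleIdx_greedy132 {p : Fin n × Fin n × Fin n} (hp : IsPattern132 f p)
    (hsub : tripleIdx p ⊆ avail) :
    ¬ Disjoint (tripleIdx p) ((greedy132 f avail).biUnion tripleIdx) := by
  induction avail using Finset.strongInduction with
  | H avail ih =>
  have h : avail.Nonempty := ⟨p.1, hsub (by simp [tripleIdx])⟩
  set k := avail.max' h
  by_cases hex : ∃ j ∈ avail, ∃ i ∈ avail, IsPattern132 f (i, j, k)
  · obtain ⟨i, j, heq⟩ := greedy132_eq_insert f h hex
    rw [heq, Finset.biUnion_insert, Finset.disjoint_union_right, not_and_or]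
    by_cases hmeet : Disjoint (tripleIdx p) (tripleIdx (i, j, k))
    · refine .inr (ih _ ?_ fun x hx => ?_)
      · exact (Finset.erase_subset _ _).trans_ssubset
          ((Finset.erase_subset _ _).trans_ssubset (Finset.erase_ssubset (avail.max'_mem h)))
      · have hx' : x ∉ tripleIdx (i, j, k) := Finset.disjoint_left.mp hmeet hx
        simp only [tripleIdx, Finset.mem_insert, Finset.mem_singleton, not_or] at hx'
        simp only [Finset.mem_erase]
        exact ⟨hx'.1, hx'.2.1, hx'.2.2, hsub hx⟩
    · exact .inl hmeet
  · have htop : p.2.2 < k := by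
      refine lt_of_le_of_ne (avail.le_max' _ (hsub (by simp [tripleIdx]))) fun hk => hex ?_
      refine ⟨p.2.1, hsub (by simp [tripleIdx]), p.1, hsub (by simp [tripleIdx]), ?_⟩
      rw [← hk]
      exact hp
    rw [greedy132_eq_erase_max f h hex]
    refine ih _ (Finset.erase_ssubset (avail.max'_mem h)) fun x hx => ?_
    exact Finset.mem_erase.mpr ⟨((hp.le_of_mem_tripleIdx hx).trans_lt htop).ne, hsub hx⟩

end Greedy

theorem card_le_card_of_forall_not_disjoint {ι α : Type*} {s : Finset ι} {g : ι → Finset α}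
    {t : Finset α} (hdisj : (s : Set ι).PairwiseDisjoint g)
    (hmeet : ∀ i ∈ s, ¬ Disjoint (g i) t) : s.card ≤ t.card := by
  refine Finset.card_le_card_of_forall_subsingleton (fun i a => a ∈ g i) (fun i hi => ?_)
    fun a _ i hi j hj => ?_
  · obtain ⟨a, hag, hat⟩ := Finset.not_disjoint_iff.mp (hmeet i hi)
    exact ⟨a, hat, hag⟩
  · by_contra hij
    exact Finset.disjoint_left.mp (hdisj hi.1 hj.1 hij) hi.2 hj.2

theorem stmt16 (n : ℕ) (f : Fin n → ℝ) (T₀ : Finset (Fin n × Fin n × Fin n))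
    (hpat : ∀ p ∈ T₀, p.1 < p.2.1 ∧ p.2.1 < p.2.2 ∧ f p.1 < f p.2.2 ∧ f p.2.2 < f p.2.1)
    (hdisj : ∀ p ∈ T₀, ∀ q ∈ T₀, p ≠ q → Disjoint (tripleIdx p) (tripleIdx q)) :
    (T₀.card : ℝ) / 3 ≤ (greedy132 f (T₀.biUnion tripleIdx)).card := by
  set T := greedy132 f (T₀.biUnion tripleIdx)
  have hhit : T₀.card ≤ (T.biUnion tripleIdx).card :=
    card_le_card_of_forall_not_disjoint (fun p hp q hq => hdisj p hp q hq) fun p hp =>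
      not_disjoint_tripleIdx_greedy132 f (hpat p hp) (Finset.subset_biUnion_of_mem _ hp)
  have hcover : (T.biUnion tripleIdx).card ≤ T.card * 3 :=
    Finset.card_biUnion_le_card_mul _ _ _ fun _ _ => Finset.card_le_three
  have hcount : (T₀.card : ℝ) ≤ T.card * 3 := by exact_mod_cast hhit.trans hcover
  linarith
end
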